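/- Let n > 1 be a composite natural number. Then q = gcd(n / χ(n), ⌊n^(1/ω(n))⌋!) is a non-trivial divisor of n, i.e., q divides n and 1 < q < n. -/

import Mathlib

/-- `chi n` is the largest natural number `s` such that `s ^ 2` divides `n`
(for `n ≥ 1`, since any such `s` satisfies `s ≤ n`). -/
def chi (n : ℕ) : ℕ := Nat.findGreatest (fun s => s ^ 2 ∣ n) n

/-- `iroot m n` is the greatest natural number `r` with `r ^ m ≤ n`
(for `m ≥ 1` and `n ≥ 1`, since any such `r` satisfies `r ≤ n`). -/
def iroot (m n : ℕ) : ℕ := Nat.findGreatest (fun r => r ^ m ≤ n) n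

/-!
Every prime factor of `n` divides `n / χ(n)` (because `χ(n) ∣ n / χ(n)`), and the least one, `p`, satisfies `p ^ ω(n) ≤ n`,
hence `p ≤ ⌊n^(1/ω(n))⌋` and `p` divides `⌊n^(1/ω(n))⌋!`; so `p ∣ q` and `q > 1`.
If `χ(n) > 1` then `q ≤ n / χ(n) < n`. Otherwise `n` is squarefree and composite, so it is the
product of `ω(n) ≥ 2` distinct primes, and its largest prime factor `P` satisfies `n < P ^ ω(n)`;
then `⌊n^(1/ω(n))⌋ < P`, so `P` divides `n` but not `q`.
-/

open Finset
open scoped Nat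

theorem sq_chi_dvd (n : ℕ) : chi n ^ 2 ∣ n := by
  rcases eq_or_ne n 0 with rfl | hn
  · exact dvd_zero _
  · exact Nat.findGreatest_spec (P := fun s => s ^ 2 ∣ n) (m := 1)
      (Nat.one_le_iff_ne_zero.mpr hn) (by simp)

theorem chi_dvd (n : ℕ) : chi n ∣ n :=
  (dvd_pow_self _ two_ne_zero).trans (sq_chi_dvd n)

theorem le_chi_of_sq_dvd {n s : ℕ} (hn : n ≠ 0) (h : s ^ 2 ∣ n) : s ≤ chi n :=
  Nat.le_findGreatest ((Nat.le_self_pow two_ne_zero s).trans (Nat.le_of_dvd (by omega) h)) h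

theorem one_le_chi {n : ℕ} (hn : n ≠ 0) : 1 ≤ chi n :=
  le_chi_of_sq_dvd hn (by simp)

theorem squarefree_of_chi_eq_one {n : ℕ} (hn : n ≠ 0) (h : chi n = 1) : Squarefree n := by
  rw [Nat.squarefree_iff_prime_squarefree]
  intro p hp hpp
  have := le_chi_of_sq_dvd hn (by rwa [sq])
  have := hp.two_le
  omega

theorem Nat.Prime.dvd_div_chi {n p : ℕ} (hp : p.Prime) (h : p ∣ n) : p ∣ n / chi n := by
  have hchi : chi n ∣ n / chi n :=
    (Nat.dvd_div_iff_mul_dvd (chi_dvd n)).mpr (by simpa [sq] using sq_chi_dvd n)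
  rw [← Nat.mul_div_cancel' (chi_dvd n)] at h
  exact (hp.dvd_mul.mp h).elim (·.trans hchi) id

theorem iroot_pow_le (m : ℕ) {n : ℕ} (hn : n ≠ 0) : iroot m n ^ m ≤ n :=
  Nat.findGreatest_spec (P := fun r => r ^ m ≤ n) (m := 1)
    (Nat.one_le_iff_ne_zero.mpr hn) (by simpa using Nat.one_le_iff_ne_zero.mpr hn)

theorem le_iroot {m n r : ℕ} (hm : m ≠ 0) (h : r ^ m ≤ n) : r ≤ iroot m n :=
  Nat.le_findGreatest ((Nat.le_self_pow hm r).trans h) h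

theorem iroot_lt_of_lt_pow {m n r : ℕ} (hn : n ≠ 0) (h : n < r ^ m) : iroot m n < r := by
  by_contra! hr
  exact (iroot_pow_le m hn).not_gt (h.trans_le (Nat.pow_le_pow_left hr m))

theorem minFac_pow_card_primeFactors_le {n : ℕ} (hn : n ≠ 0) :
    n.minFac ^ #n.primeFactors ≤ n :=
  calc n.minFac ^ #n.primeFactors
      ≤ ∏ p ∈ n.primeFactors, p := pow_card_le_prod _ _ _ fun p hp =>
        Nat.minFac_le_of_dvd (Nat.prime_of_mem_primeFactors hp).two_le
          (Nat.dvd_of_mem_primeFactors hp)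
    _ ≤ n := Nat.le_of_dvd (by omega) (Nat.prod_primeFactors_dvd n)

theorem exists_mem_primeFactors_prod_lt_pow_card {n : ℕ} (h : n.primeFactors.Nontrivial) :
    ∃ P ∈ n.primeFactors, ∏ p ∈ n.primeFactors, p < P ^ #n.primeFactors := by
  have hne := h.nonempty
  refine ⟨_, max'_mem _ hne, ?_⟩
  rw [← prod_const]
  refine prod_lt_prod (fun p hp => (Nat.prime_of_mem_primeFactors hp).pos)
    (fun p hp => le_max' _ _ hp) ⟨_, min'_mem _ hne, min'_lt_max'_of_card _ ?_⟩
  exact one_lt_card_iff_nontrivial.mpr h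

theorem Squarefree.exists_mem_primeFactors_lt_pow_card {n : ℕ} (hsq : Squarefree n)
    (hn : 1 < n) (hnp : ¬ n.Prime) : ∃ P ∈ n.primeFactors, n < P ^ #n.primeFactors := by
  have hpow : ¬ IsPrimePow n := fun h =>
    hnp (Nat.squarefree_and_prime_pow_iff_prime.mp ⟨hsq, h⟩)
  have := exists_mem_primeFactors_prod_lt_pow_card
    ((Nat.not_isPrimePow_iff_nontrivial_of_two_le hn).mp hpow)
  rwa [Nat.prod_primeFactors_of_squarefree hsq] at this

theorem one_lt_gcd_div_chi_factorial_iroot {n : ℕ} (hn : 1 < n) :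
    1 < Nat.gcd (n / chi n) (iroot #n.primeFactors n)! := by
  have hp := Nat.minFac_prime hn.ne'
  have hcard : #n.primeFactors ≠ 0 :=
    (card_pos.mpr ⟨_, Nat.mem_primeFactors.mpr ⟨hp, Nat.minFac_dvd n, by omega⟩⟩).ne'
  have hp_le : n.minFac ≤ iroot #n.primeFactors n :=
    le_iroot hcard (minFac_pow_card_primeFactors_le (by omega))
  have hp_dvd : n.minFac ∣ Nat.gcd (n / chi n) (iroot #n.primeFactors n)! :=
    Nat.dvd_gcd (hp.dvd_div_chi (Nat.minFac_dvd n)) (Nat.dvd_factorial hp.pos hp_le)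
  exact hp.one_lt.trans_le (Nat.le_of_dvd (Nat.gcd_pos_of_pos_right _ (Nat.factorial_pos _)) hp_dvd)

theorem gcd_div_chi_factorial_iroot_lt {n : ℕ} (hn : 1 < n) (hnp : ¬ n.Prime) :
    Nat.gcd (n / chi n) (iroot #n.primeFactors n)! < n := by
  have hn0 : n ≠ 0 := by omega
  have hq_le : Nat.gcd (n / chi n) (iroot #n.primeFactors n)! ≤ n :=
    Nat.le_of_dvd (by omega) ((Nat.gcd_dvd_left _ _).trans (Nat.div_dvd_of_dvd (chi_dvd n)))
  rcases (one_le_chi hn0).eq_or_lt with hchi | hchi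
  · obtain ⟨P, hP, hlt⟩ :=
      (squarefree_of_chi_eq_one hn0 hchi.symm).exists_mem_primeFactors_lt_pow_card hn hnp
    have hP_prime := Nat.prime_of_mem_primeFactors hP
    have hP_not_dvd : ¬ P ∣ (iroot #n.primeFactors n)! := by
      rw [hP_prime.dvd_factorial, not_le]
      exact iroot_lt_of_lt_pow hn0 hlt
    refine hq_le.lt_of_ne fun hq => hP_not_dvd ?_
    exact (hq ▸ Nat.dvd_of_mem_primeFactors hP).trans (Nat.gcd_dvd_right _ _)
  · calc Nat.gcd (n / chi n) (iroot #n.primeFactors n)! ≤ n / chi n :=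
          Nat.gcd_le_left _ (Nat.div_pos (Nat.le_of_dvd (by omega) (chi_dvd n)) (by omega))
      _ < n := Nat.div_lt_self (by omega) hchi

theorem stmt_17 (n : ℕ) (hn : 1 < n) (hcomp : ¬ n.Prime) :
    Nat.gcd (n / chi n) (Nat.factorial (iroot n.primeFactors.card n)) ∣ n ∧
    1 < Nat.gcd (n / chi n) (Nat.factorial (iroot n.primeFactors.card n)) ∧
    Nat.gcd (n / chi n) (Nat.factorial (iroot n.primeFactors.card n)) < n :=
  ⟨(Nat.gcd_dvd_left _ _).trans (Nat.div_dvd_of_dvd (chi_dvd n)),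
    one_lt_gcd_div_chi_factorial_iroot hn, gcd_div_chi_factorial_iroot_lt hn hcomp⟩
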